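/- There exists a constant a > 0 such that for every real κ ≥ 2, if N is a Poisson random variable with mean κ (i.e. ℙ(N = m) = e^{−κ} κ^m / m! for m ∈ ℕ), then ∑_{m=0}^∞ e^{−κ} (κ^m / m!) · H(m) ≥ log(κ/2) · (1 − exp(−a·κ)), where H(m) = ∑_{i=1}^m 1/i is the m-th harmonic number (H(0) = 0) and log denotes the natural logarithm. -/

import Mathlib

/-- The `m`-th harmonic number `H(m) = ∑_{i=1}^m 1/i` (with `H(0) = 0`). -/
noncomputable def harmonic' (m : ℕ) : ℝ := ∑ i ∈ Finset.Icc 1 m, (1 : ℝ) / i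

lemma harmonic'_eq (m : ℕ) : harmonic' m = (harmonic m : ℝ) := by
  rw [harmonic', harmonic_eq_sum_Icc]
  simp [one_div]

lemma harmonic'_nonneg (m : ℕ) : 0 ≤ harmonic' m := by
  unfold harmonic'
  positivity

lemma harmonic'_le (m : ℕ) : harmonic' m ≤ m := by
  calc harmonic' m ≤ ∑ i ∈ Finset.Icc 1 m, (1 : ℝ) := by
        apply Finset.sum_le_sum
        intro i hi
        rw [Finset.mem_Icc] at hi
        have : (1 : ℝ) ≤ i := by exact_mod_cast hi.1
        rw [div_le_one (by linarith)]
        exact this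
    _ = m := by simp

lemma log_le_harmonic' {x : ℝ} (hx : 0 < x) {m : ℕ} (hm : x ≤ m) :
    Real.log x ≤ harmonic' m := by
  rw [harmonic'_eq]
  calc Real.log x ≤ Real.log (m + 1) := by
        apply Real.log_le_log hx; linarith
    _ ≤ (harmonic m : ℝ) := by exact_mod_cast log_add_one_le_harmonic m

lemma real_exp_eq_tsum (x : ℝ) : Real.exp x = ∑' n : ℕ, x ^ n / n.factorial := by
  rw [Real.exp_eq_exp_ℝ, NormedSpace.exp_eq_tsum_div]

/-- There is a constant `a > 0` such that for every `κ ≥ 2`, the Poisson mixture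
of harmonic numbers satisfies
`∑_m e^{-κ} (κ^m / m!) H(m) ≥ log (κ/2) · (1 - exp (-a κ))`. -/
theorem poisson_mixture_harmonic_lower_bound :
    ∃ a : ℝ, 0 < a ∧
      ∀ κ : ℝ, 2 ≤ κ →
        Real.log (κ / 2) * (1 - Real.exp (-a * κ)) ≤
          ∑' m : ℕ, Real.exp (-κ) * (κ ^ m / Nat.factorial m) * harmonic' m := by
  have hlog2 : Real.log 2 < 1 := by
    have := Real.log_two_lt_d9
    linarith
  have hlog2' : 0 ≤ Real.log 2 := Real.log_nonneg (by norm_num)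
  refine ⟨(1 - Real.log 2) / 2, by linarith, ?_⟩
  intro κ hκ
  have hκ0 : 0 < κ := by linarith
  set a : ℝ := (1 - Real.log 2) / 2 with ha
  set p : ℕ → ℝ := fun m => Real.exp (-κ) * (κ ^ m / Nat.factorial m) with hpdef
  set f : ℕ → ℝ := fun m => Real.exp (-κ) * (κ ^ m / Nat.factorial m) * harmonic' m
    with hfdef
  have hp_nonneg : ∀ m, 0 ≤ p m := fun m => by
    simp only [hpdef]
    positivity
  have hf_nonneg : ∀ m, 0 ≤ f m := fun m =>
    mul_nonneg (hp_nonneg m) (harmonic'_nonneg m)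
  have hp_sum : Summable p := (Real.summable_pow_div_factorial κ).mul_left _
  have hp_tsum : ∑' m, p m = 1 := by
    rw [hpdef]
    rw [tsum_mul_left, ← real_exp_eq_tsum, ← Real.exp_add]
    simp
  have hf_sum : Summable f := by
    refine Summable.of_nonneg_of_le hf_nonneg ?_
      ((Real.summable_pow_div_factorial (2 * κ)).mul_left (Real.exp (-κ)))
    intro m
    have h1 : harmonic' m ≤ (2 : ℝ) ^ m := by
      calc harmonic' m ≤ m := harmonic'_le m
        _ ≤ (2 : ℝ) ^ m := by exact_mod_cast (Nat.lt_two_pow_self (n := m)).le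
    have h2 : κ ^ m / (Nat.factorial m : ℝ) * harmonic' m
        ≤ (2 * κ) ^ m / Nat.factorial m := by
      rw [mul_pow]
      calc κ ^ m / (Nat.factorial m : ℝ) * harmonic' m
          ≤ κ ^ m / (Nat.factorial m : ℝ) * 2 ^ m := by
            apply mul_le_mul_of_nonneg_left h1
            positivity
        _ = 2 ^ m * κ ^ m / Nat.factorial m := by ring
    calc f m = Real.exp (-κ) * (κ ^ m / Nat.factorial m * harmonic' m) := by
          rw [hfdef]; ring
      _ ≤ _ := mul_le_mul_of_nonneg_left h2 (Real.exp_nonneg _)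
  set n0 : ℕ := ⌈κ / 2⌉₊ with hn0
  set s : Finset ℕ := Finset.range n0 with hs
  set c : ℝ := Real.log (κ / 2) with hc
  have hc0 : 0 ≤ c := Real.log_nonneg (by linarith)
  set S : ℝ := ∑ m ∈ s, p m with hS
  -- Chernoff-type bound: S ≤ exp (-a κ)
  have hchernoff : S ≤ Real.exp (-a * κ) := by
    have hterm : ∀ m ∈ s, p m ≤
        Real.exp (-κ) * Real.exp (κ / 2 * Real.log 2) * ((κ / 2) ^ m / Nat.factorial m) := by
      intro m hm
      rw [hs, Finset.mem_range, hn0, Nat.lt_ceil] at hm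
      have h2m : (2 : ℝ) ^ m ≤ Real.exp (κ / 2 * Real.log 2) := by
        have : (2 : ℝ) ^ m = Real.exp (m * Real.log 2) := by
          rw [Real.exp_nat_mul, Real.exp_log (by norm_num)]
        rw [this]
        apply Real.exp_le_exp.mpr
        apply mul_le_mul_of_nonneg_right hm.le hlog2'
      have hκm : κ ^ m = (κ / 2) ^ m * 2 ^ m := by
        rw [← mul_pow]; ring_nf
      calc p m = Real.exp (-κ) * ((κ / 2) ^ m / Nat.factorial m * 2 ^ m) := by
            rw [hpdef]; simp only; rw [hκm]; ring
        _ ≤ Real.exp (-κ) * ((κ / 2) ^ m / Nat.factorial m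
              * Real.exp (κ / 2 * Real.log 2)) := by
            apply mul_le_mul_of_nonneg_left _ (Real.exp_nonneg _)
            apply mul_le_mul_of_nonneg_left h2m
            positivity
        _ = _ := by ring
    calc S ≤ ∑ m ∈ s, Real.exp (-κ) * Real.exp (κ / 2 * Real.log 2)
            * ((κ / 2) ^ m / Nat.factorial m) := Finset.sum_le_sum hterm
      _ = Real.exp (-κ) * Real.exp (κ / 2 * Real.log 2)
            * ∑ m ∈ s, ((κ / 2) ^ m / Nat.factorial m) := by
          rw [Finset.mul_sum]
      _ ≤ Real.exp (-κ) * Real.exp (κ / 2 * Real.log 2) * Real.exp (κ / 2) := by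
          apply mul_le_mul_of_nonneg_left
            (Real.sum_le_exp_of_nonneg (by linarith) _) (by positivity)
      _ = Real.exp (-a * κ) := by
          rw [← Real.exp_add, ← Real.exp_add]
          congr 1
          rw [ha]; ring
  -- main bound: c * (1 - S) ≤ ∑' f
  have hmain : c * (1 - S) ≤ ∑' m, f m := by
    have hcompl_p := Summable.sum_add_tsum_compl (s := s) hp_sum
    have hcompl_f := Summable.sum_add_tsum_compl (s := s) hf_sum
    have h1 : (1 : ℝ) - S = ∑' m : ((s : Set ℕ)ᶜ : Set ℕ), p m := by
      rw [← hp_tsum, ← hcompl_p, hS]; ring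
    have hterm : ∀ m : ((s : Set ℕ)ᶜ : Set ℕ), c * p m ≤ f m := by
      rintro ⟨m, hm⟩
      simp only [Set.mem_compl_iff, Finset.coe_range, Set.mem_Iio, not_lt, hs] at hm
      have hm' : κ / 2 ≤ m := by
        rw [hn0] at hm
        exact_mod_cast (Nat.ceil_le.mp hm)
      have : c ≤ harmonic' m := log_le_harmonic' (by linarith) hm'
      calc c * p m ≤ harmonic' m * p m :=
            mul_le_mul_of_nonneg_right this (hp_nonneg m)
        _ = f m := by rw [hfdef]; ring
    calc c * (1 - S) = ∑' m : ((s : Set ℕ)ᶜ : Set ℕ), c * p m := by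
          rw [h1]; exact tsum_mul_left.symm
      _ ≤ ∑' m : ((s : Set ℕ)ᶜ : Set ℕ), f m := by
          apply Summable.tsum_le_tsum hterm
          · exact (hp_sum.mul_left c).subtype _
          · exact hf_sum.subtype _
      _ ≤ ∑' m, f m := by
          rw [← hcompl_f]
          have : 0 ≤ ∑ m ∈ s, f m := Finset.sum_nonneg fun m _ => hf_nonneg m
          linarith
  calc c * (1 - Real.exp (-a * κ)) ≤ c * (1 - S) := by
        apply mul_le_mul_of_nonneg_left _ hc0
        linarith
    _ ≤ ∑' m, f m := hmain
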